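/- arXiv:1107.3042 — 4 statements merged into one kernel-verified Lean document; each statement's English description precedes it below -/
import Mathlib

section
/- If a probability space consists of four atoms α, β, γ, δ of positive probability, then the lattice Λ of sub-σ-fields contains a copy of the pentagon N₅, and hence is not modular. Concretely, with u = σ(α, γ, β∪δ), v = σ(α∪β, γ∪δ), w = σ(α∪γ, β∪δ), the five elements 0, 1, u, v, w form a pentagon sublattice. -/
open MeasureTheory

noncomputable section

/-- `u = σ(α, γ, β ∪ δ)` for the four atoms `α = {0}, β = {1}, γ = {2}, δ = {3}`. -/
def uSF : MeasurableSpace (Fin 4) :=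
  MeasurableSpace.generateFrom {({0} : Set (Fin 4)), {2}, {1, 3}}

/-- `v = σ(α ∪ β, γ ∪ δ)`. -/
def vSF : MeasurableSpace (Fin 4) :=
  MeasurableSpace.generateFrom {({0, 1} : Set (Fin 4)), {2, 3}}

/-- `w = σ(α ∪ γ, β ∪ δ)`. -/
def wSF : MeasurableSpace (Fin 4) :=
  MeasurableSpace.generateFrom {({0, 2} : Set (Fin 4)), {1, 3}}

/-- The σ-algebra of sets not separating `a` and `b`. -/
def pairInv (a b : Fin 4) : MeasurableSpace (Fin 4) where
  MeasurableSet' s := a ∈ s ↔ b ∈ s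
  measurableSet_empty := Iff.rfl
  measurableSet_compl s hs := not_congr hs
  measurableSet_iUnion f hf := by
    simp only [Set.mem_iUnion]
    exact exists_congr hf

lemma mem_pairInv {a b : Fin 4} {s : Set (Fin 4)} (h : a ∈ s ↔ b ∈ s) :
    MeasurableSet[pairInv a b] s := h

lemma uSF_le : uSF ≤ pairInv 1 3 := by
  apply MeasurableSpace.generateFrom_le
  rintro t ht
  simp only [Set.mem_insert_iff, Set.mem_singleton_iff] at ht
  rcases ht with rfl | rfl | rfl <;> exact mem_pairInv (by decide)

lemma vSF_le : vSF ≤ pairInv 0 1 ⊓ pairInv 2 3 := by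
  apply MeasurableSpace.generateFrom_le
  rintro t ht
  simp only [Set.mem_insert_iff, Set.mem_singleton_iff] at ht
  rcases ht with rfl | rfl <;>
    exact ⟨mem_pairInv (by decide), mem_pairInv (by decide)⟩

lemma wSF_le : wSF ≤ pairInv 0 2 ⊓ pairInv 1 3 := by
  apply MeasurableSpace.generateFrom_le
  rintro t ht
  simp only [Set.mem_insert_iff, Set.mem_singleton_iff] at ht
  rcases ht with rfl | rfl <;>
    exact ⟨mem_pairInv (by decide), mem_pairInv (by decide)⟩

lemma mem_uSF_0 : MeasurableSet[uSF] {(0 : Fin 4)} :=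
  MeasurableSpace.measurableSet_generateFrom (by simp)

lemma mem_uSF_2 : MeasurableSet[uSF] {(2 : Fin 4)} :=
  MeasurableSpace.measurableSet_generateFrom (by simp)

lemma mem_uSF_13 : MeasurableSet[uSF] ({1, 3} : Set (Fin 4)) :=
  MeasurableSpace.measurableSet_generateFrom (by simp)

lemma mem_vSF_01 : MeasurableSet[vSF] ({0, 1} : Set (Fin 4)) :=
  MeasurableSpace.measurableSet_generateFrom (by simp)

lemma mem_vSF_23 : MeasurableSet[vSF] ({2, 3} : Set (Fin 4)) :=
  MeasurableSpace.measurableSet_generateFrom (by simp)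

lemma mem_wSF_02 : MeasurableSet[wSF] ({0, 2} : Set (Fin 4)) :=
  MeasurableSpace.measurableSet_generateFrom (by simp)

lemma mem_wSF_13 : MeasurableSet[wSF] ({1, 3} : Set (Fin 4)) :=
  MeasurableSpace.measurableSet_generateFrom (by simp)

lemma wSF_le_uSF : wSF ≤ uSF := by
  apply MeasurableSpace.generateFrom_le
  rintro t ht
  simp only [Set.mem_insert_iff, Set.mem_singleton_iff] at ht
  rcases ht with rfl | rfl
  · have : ({0, 2} : Set (Fin 4)) = {0} ∪ {2} := by ext x; simp; tauto
    rw [this]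
    exact mem_uSF_0.union mem_uSF_2
  · exact mem_uSF_13

lemma bot_lt_wSF : (⊥ : MeasurableSpace (Fin 4)) < wSF := by
  refine lt_of_le_of_ne bot_le fun h => ?_
  have := mem_wSF_02
  rw [← h, MeasurableSpace.measurableSet_bot_iff] at this
  rcases this with h1 | h1
  · have h0 : (0 : Fin 4) ∈ ({0, 2} : Set (Fin 4)) := by simp
    rw [h1] at h0
    exact h0
  · have h0 : (1 : Fin 4) ∈ ({0, 2} : Set (Fin 4)) := h1 ▸ Set.mem_univ _
    simp at h0

lemma wSF_lt_uSF : wSF < uSF := by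
  refine lt_of_le_of_ne wSF_le_uSF fun h => ?_
  have h0 := mem_uSF_0
  rw [← h] at h0
  have h2 : (0 : Fin 4) ∈ ({0} : Set (Fin 4)) ↔ (2 : Fin 4) ∈ ({0} : Set (Fin 4)) :=
    (wSF_le _ h0).1
  simp at h2

lemma uSF_lt_top : uSF < (⊤ : MeasurableSpace (Fin 4)) := by
  refine lt_of_le_of_ne le_top fun h => ?_
  have h1 : MeasurableSet[uSF] {(1 : Fin 4)} := h ▸ trivial
  have h2 : (1 : Fin 4) ∈ ({1} : Set (Fin 4)) ↔ (3 : Fin 4) ∈ ({1} : Set (Fin 4)) :=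
    uSF_le _ h1
  simp at h2

lemma bot_lt_vSF : (⊥ : MeasurableSpace (Fin 4)) < vSF := by
  refine lt_of_le_of_ne bot_le fun h => ?_
  have := mem_vSF_01
  rw [← h, MeasurableSpace.measurableSet_bot_iff] at this
  rcases this with h1 | h1
  · have h0 : (0 : Fin 4) ∈ ({0, 1} : Set (Fin 4)) := by simp
    rw [h1] at h0
    exact h0
  · have h0 : (2 : Fin 4) ∈ ({0, 1} : Set (Fin 4)) := h1 ▸ Set.mem_univ _
    simp at h0

lemma vSF_lt_top : vSF < (⊤ : MeasurableSpace (Fin 4)) := by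
  refine lt_of_le_of_ne le_top fun h => ?_
  have h1 : MeasurableSet[vSF] {(0 : Fin 4)} := h ▸ trivial
  have h2 : (0 : Fin 4) ∈ ({0} : Set (Fin 4)) ↔ (1 : Fin 4) ∈ ({0} : Set (Fin 4)) :=
    (vSF_le _ h1).1
  simp at h2

lemma uSF_inf_vSF : uSF ⊓ vSF = (⊥ : MeasurableSpace (Fin 4)) := by
  refine le_antisymm ?_ bot_le
  intro s hs
  have hu : MeasurableSet[uSF] s := inf_le_left (α := MeasurableSpace (Fin 4)) _ hs
  have hv : MeasurableSet[vSF] s := inf_le_right (α := MeasurableSpace (Fin 4)) _ hs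
  have h13 : (1 : Fin 4) ∈ s ↔ 3 ∈ s := uSF_le _ hu
  have h01 : (0 : Fin 4) ∈ s ↔ 1 ∈ s := (vSF_le _ hv).1
  have h23 : (2 : Fin 4) ∈ s ↔ 3 ∈ s := (vSF_le _ hv).2
  rw [MeasurableSpace.measurableSet_bot_iff]
  by_cases h0 : (0 : Fin 4) ∈ s
  · right
    ext x
    simp only [Set.mem_univ, iff_true]
    fin_cases x
    · exact h0
    · exact h01.mp h0
    · exact h23.mpr (h13.mp (h01.mp h0))
    · exact h13.mp (h01.mp h0)
  · left
    ext x
    simp only [Set.mem_empty_iff_false, iff_false]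
    fin_cases x
    · exact h0
    · exact fun h => h0 (h01.mpr h)
    · exact fun h => h0 (h01.mpr (h13.mpr (h23.mp h)))
    · exact fun h => h0 (h01.mpr (h13.mpr h))

lemma wSF_inf_vSF : wSF ⊓ vSF = (⊥ : MeasurableSpace (Fin 4)) := by
  refine le_antisymm ?_ bot_le
  intro s hs
  have hw : MeasurableSet[wSF] s := inf_le_left (α := MeasurableSpace (Fin 4)) _ hs
  have hv : MeasurableSet[vSF] s := inf_le_right (α := MeasurableSpace (Fin 4)) _ hs
  have h02 : (0 : Fin 4) ∈ s ↔ 2 ∈ s := (wSF_le _ hw).1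
  have h13 : (1 : Fin 4) ∈ s ↔ 3 ∈ s := (wSF_le _ hw).2
  have h01 : (0 : Fin 4) ∈ s ↔ 1 ∈ s := (vSF_le _ hv).1
  rw [MeasurableSpace.measurableSet_bot_iff]
  by_cases h0 : (0 : Fin 4) ∈ s
  · right
    ext x
    simp only [Set.mem_univ, iff_true]
    fin_cases x
    · exact h0
    · exact h01.mp h0
    · exact h02.mp h0
    · exact h13.mp (h01.mp h0)
  · left
    ext x
    simp only [Set.mem_empty_iff_false, iff_false]
    fin_cases x
    · exact h0
    · exact fun h => h0 (h01.mpr h)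
    · exact fun h => h0 (h02.mpr h)
    · exact fun h => h0 (h01.mpr (h13.mpr h))

lemma top_le_of_singletons {m : MeasurableSpace (Fin 4)}
    (h : ∀ i : Fin 4, MeasurableSet[m] {i}) : (⊤ : MeasurableSpace (Fin 4)) ≤ m := by
  intro s _
  have : s = ⋃ i ∈ s, {i} := by ext x; simp
  rw [this]
  exact MeasurableSet.biUnion (Set.to_countable s) fun i _ => h i

lemma uSF_sup_vSF : uSF ⊔ vSF = (⊤ : MeasurableSpace (Fin 4)) := by
  refine le_antisymm le_top (top_le_of_singletons fun i => ?_)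
  have hu : uSF ≤ uSF ⊔ vSF := le_sup_left
  have hv : vSF ≤ vSF ⊔ uSF := le_sup_left
  fin_cases i
  · exact hu _ mem_uSF_0
  · have hs : ({1} : Set (Fin 4)) = {1, 3} ∩ {0, 1} := by ext x; fin_cases x <;> simp
    have : MeasurableSet[uSF ⊔ vSF] ({1} : Set (Fin 4)) := by rw [hs]; exact (hu _ mem_uSF_13).inter (le_sup_right (α := MeasurableSpace (Fin 4)) _ mem_vSF_01)
    exact this
  · exact hu _ mem_uSF_2
  · have hs : ({3} : Set (Fin 4)) = {1, 3} ∩ {2, 3} := by ext x; fin_cases x <;> simp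
    have : MeasurableSet[uSF ⊔ vSF] ({3} : Set (Fin 4)) := by rw [hs]; exact (hu _ mem_uSF_13).inter (le_sup_right (α := MeasurableSpace (Fin 4)) _ mem_vSF_23)
    exact this

lemma wSF_sup_vSF : wSF ⊔ vSF = (⊤ : MeasurableSpace (Fin 4)) := by
  refine le_antisymm le_top (top_le_of_singletons fun i => ?_)
  have hw : wSF ≤ wSF ⊔ vSF := le_sup_left
  have hv : vSF ≤ wSF ⊔ vSF := le_sup_right
  fin_cases i
  · have hs : ({0} : Set (Fin 4)) = {0, 2} ∩ {0, 1} := by ext x; fin_cases x <;> simp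
    have : MeasurableSet[wSF ⊔ vSF] ({0} : Set (Fin 4)) := by rw [hs]; exact (hw _ mem_wSF_02).inter (hv _ mem_vSF_01)
    exact this
  · have hs : ({1} : Set (Fin 4)) = {1, 3} ∩ {0, 1} := by ext x; fin_cases x <;> simp
    have : MeasurableSet[wSF ⊔ vSF] ({1} : Set (Fin 4)) := by rw [hs]; exact (hw _ mem_wSF_13).inter (hv _ mem_vSF_01)
    exact this
  · have hs : ({2} : Set (Fin 4)) = {0, 2} ∩ {2, 3} := by ext x; fin_cases x <;> simp
    have : MeasurableSet[wSF ⊔ vSF] ({2} : Set (Fin 4)) := by rw [hs]; exact (hw _ mem_wSF_02).inter (hv _ mem_vSF_23)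
    exact this
  · have hs : ({3} : Set (Fin 4)) = {1, 3} ∩ {2, 3} := by ext x; fin_cases x <;> simp
    have : MeasurableSet[wSF ⊔ vSF] ({3} : Set (Fin 4)) := by rw [hs]; exact (hw _ mem_wSF_13).inter (hv _ mem_vSF_23)
    exact this

/-- On a probability space consisting of four atoms of positive probability, the lattice of
sub-σ-fields contains the pentagon `0 < w < u < 1`, `0 < v < 1`, `u ⊓ v = w ⊓ v = 0`,
`u ⊔ v = w ⊔ v = 1`; hence it is not modular. -/
theorem stmt3 (μ : @Measure (Fin 4) ⊤) (hμ : @IsProbabilityMeasure (Fin 4) ⊤ μ)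
    (hpos : ∀ i : Fin 4, 0 < μ {i}) :
    (⊥ : MeasurableSpace (Fin 4)) < wSF ∧ wSF < uSF ∧ uSF < (⊤ : MeasurableSpace (Fin 4)) ∧
    (⊥ : MeasurableSpace (Fin 4)) < vSF ∧ vSF < (⊤ : MeasurableSpace (Fin 4)) ∧
    uSF ⊓ vSF = (⊥ : MeasurableSpace (Fin 4)) ∧ wSF ⊓ vSF = (⊥ : MeasurableSpace (Fin 4)) ∧
    uSF ⊔ vSF = (⊤ : MeasurableSpace (Fin 4)) ∧ wSF ⊔ vSF = (⊤ : MeasurableSpace (Fin 4)) ∧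
    ¬ IsModularLattice (MeasurableSpace (Fin 4)) := by
  refine ⟨bot_lt_wSF, wSF_lt_uSF, uSF_lt_top, bot_lt_vSF, vSF_lt_top,
    uSF_inf_vSF, wSF_inf_vSF, uSF_sup_vSF, wSF_sup_vSF, fun hmod => ?_⟩
  have h := hmod.sup_inf_le_assoc_of_le (x := wSF) (y := vSF) (z := uSF) wSF_le_uSF
  rw [wSF_sup_vSF, inf_comm vSF uSF, uSF_inf_vSF, sup_bot_eq, top_inf_eq] at h
  exact absurd h (not_le_of_gt wSF_lt_uSF)
end
end

section
/- There exist a probability space, elements x_n, x, y of the lattice Λ of sub-σ-fields with x_n increasing to x (i.e., x₁ ≤ x₂ ≤ … and sup_n x_n = x), x_n ∧ y = 0 for all n, yet x ∧ y = y ≠ 0. In particular, the meet operation in Λ is not continuous along increasing sequences. -/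
open MeasureTheory Filter Topology

set_option synthInstance.maxHeartbeats 400000
noncomputable section

variable {Ω : Type*}

/-- The trivial σ-field augmented with all null sets: the least element `0` of `Λ`. -/
def nullSF {m0 : MeasurableSpace Ω} (μ : Measure Ω) : MeasurableSpace Ω :=
  MeasurableSpace.generateFrom {s : Set Ω | μ s = 0}

/-- Membership in `Λ`: a sub-σ-field of `m0` containing all null sets. -/
def InLam {m0 : MeasurableSpace Ω} (μ : Measure Ω) (m : MeasurableSpace Ω) : Prop :=
  m ≤ m0 ∧ nullSF μ ≤ m

set_option synthInstance.maxHeartbeats 400000 in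
/-- The type `L₂` subspace `L₂(m)` of `H = L₂(Ω, F, P)`. -/
abbrev L2S {m0 : MeasurableSpace Ω} (μ : Measure Ω) (m : MeasurableSpace Ω) :
    Submodule ℝ (Lp ℝ 2 μ) :=
  @lpMeas Ω ℝ ℝ _ _ _ m m0 2 μ

/-- The orthogonal projection of `H = L₂(Ω, F, P)` onto `L₂(m)`. -/
def Q {m0 : MeasurableSpace Ω} (μ : Measure Ω) (m : MeasurableSpace Ω) :
    Lp ℝ 2 μ →L[ℝ] Lp ℝ 2 μ :=
  letI := Classical.dec (m ≤ m0)
  if hm : m ≤ m0 then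
    haveI : Fact (m ≤ m0) := ⟨hm⟩
    (L2S μ m).subtypeL.comp ((L2S μ m).orthogonalProjectionOnto)
  else 0

/-- Strong operator convergence of the projections `Q (x n)` to `Q l`. -/
def SOTLim {m0 : MeasurableSpace Ω} (μ : Measure Ω) (x : ℕ → MeasurableSpace Ω)
    (l : MeasurableSpace Ω) : Prop :=
  ∀ f : Lp ℝ 2 μ, Tendsto (fun n => Q μ (x n) f) atTop (𝓝 (Q μ l f))

/-!
Take `Ω = ℕ` with a geometric law; it charges every point, so `0` is the trivial σ-field `⊥`.
Let `x n` be generated by `k ↦ min k n` and `y` by the parity. The σ-field `x n` cannot separate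
points `≥ n`, and every point has the parity of some point `≥ n`, so a set in `x n ⊓ y` is `∅` or
`ℕ`. Yet the `x n` separate more and more singletons and increase to the discrete σ-field,
which contains `y`.
-/

open ProbabilityTheory Set

theorem nullSF_eq_bot {m0 : MeasurableSpace Ω} {μ : Measure Ω} (hμ : ∀ a, μ {a} ≠ 0) :
    nullSF μ = ⊥ := by
  refine le_bot_iff.1 (MeasurableSpace.generateFrom_le fun s hs => ?_)
  refine MeasurableSpace.measurableSet_bot_iff.2 (Or.inl ?_)
  exact eq_empty_of_forall_notMem fun a ha =>
    hμ a (measure_mono_null (singleton_subset_iff.2 ha) hs)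

theorem inLam_of_forall_singleton_ne_zero {m0 : MeasurableSpace Ω} {μ : Measure Ω}
    (hμ : ∀ a, μ {a} ≠ 0) {m : MeasurableSpace Ω} (hm : m ≤ m0) : InLam μ m :=
  ⟨hm, nullSF_eq_bot hμ ▸ bot_le⟩

theorem geometricMeasure_singleton_ne_zero {p : unitInterval} (h0 : p ≠ 0) (h1 : p ≠ 1) (n : ℕ) :
    geometricMeasure p {n} ≠ 0 := by
  rw [geometricMeasure_singleton h0]
  exact (ENNReal.ofReal_pos.2 (geometricMeasure_pos h0 h1 n)).ne'

namespace MeasurableSpace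

variable {α β γ : Type*}

theorem comap_inf_comap_eq_bot [mβ : MeasurableSpace β] [mγ : MeasurableSpace γ]
    (f : α → β) (g : α → γ) (c : α) (h : ∀ a, ∃ b, g b = g a ∧ f b = f c) :
    mβ.comap f ⊓ mγ.comap g = ⊥ := by
  refine le_bot_iff.1 fun s hs => ?_
  obtain ⟨⟨t, -, rfl⟩, ⟨u, -, hu⟩⟩ := measurableSet_inf.1 hs
  have hc : ∀ a, a ∈ f ⁻¹' t ↔ c ∈ f ⁻¹' t := fun a => by
    obtain ⟨b, hgb, hfb⟩ := h a
    rw [← hu, mem_preimage, ← hgb, ← mem_preimage, hu, mem_preimage, hfb, mem_preimage]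
  rw [measurableSet_bot_iff]
  by_cases hct : c ∈ f ⁻¹' t
  · exact Or.inr (eq_univ_of_forall fun a => (hc a).2 hct)
  · exact Or.inl (eq_empty_of_forall_notMem fun a ha => hct ((hc a).1 ha))

theorem comap_top_ne_bot {f : α → β} {a b : α} (h : f a ≠ f b) :
    (⊤ : MeasurableSpace β).comap f ≠ ⊥ := by
  intro hbot
  have hfa : MeasurableSet[(⊤ : MeasurableSpace β).comap f] (f ⁻¹' {f a}) := ⟨_, trivial, rfl⟩
  rcases measurableSet_bot_iff.1 (hbot ▸ hfa) with hempty | huniv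
  · exact eq_empty_iff_forall_notMem.1 hempty a rfl
  · exact h (eq_univ_iff_forall.1 huniv b).symm

variable [LinearOrder α]

theorem monotone_comap_min : Monotone fun n : α => (⊤ : MeasurableSpace α).comap (min · n) := by
  intro n m hnm
  have hfac : (min · n) = (min · n) ∘ (min · m) :=
    funext fun k => by simp [min_assoc, min_eq_right hnm]
  dsimp only
  rw [hfac, ← comap_comp]
  exact comap_mono le_top

theorem iSup_comap_min_eq_top [NoMaxOrder α] [Countable α] :
    ⨆ n : α, (⊤ : MeasurableSpace α).comap (min · n) = ⊤ := by
  have hsingleton (k : α) :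
      MeasurableSet[⨆ n : α, (⊤ : MeasurableSpace α).comap (min · n)] {k} := by
    obtain ⟨n, hkn⟩ := exists_gt k
    have hpre : (min · n) ⁻¹' {k} = {k} := by
      ext j
      simp only [mem_preimage, mem_singleton_iff, min_eq_iff]
      refine ⟨?_, fun hj => Or.inl ⟨hj, hj ▸ hkn.le⟩⟩
      rintro (⟨hj, -⟩ | ⟨rfl, -⟩)
      · exact hj
      · exact absurd hkn (lt_irrefl _)
    exact le_iSup (fun n : α => (⊤ : MeasurableSpace α).comap (min · n)) n _
      (hpre ▸ ⟨{k}, trivial, rfl⟩)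
  refine top_le_iff.1 fun s _ => ?_
  rw [← biUnion_of_singleton s]
  exact MeasurableSet.biUnion s.to_countable fun k _ => hsingleton k

end MeasurableSpace

open MeasurableSpace

/-- There exist a probability space and `x_n, x, y ∈ Λ` with `x_n ↑ x`, `x_n ∧ y = 0` for all
`n`, yet `x ∧ y = y ≠ 0`: the meet is not continuous along increasing sequences. -/
theorem stmt4 :
    ∃ (Ω : Type) (m0 : MeasurableSpace Ω) (μ : @Measure Ω m0),
      @IsProbabilityMeasure Ω m0 μ ∧
      ∃ (x : ℕ → MeasurableSpace Ω) (xl y : MeasurableSpace Ω),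
        (∀ n, InLam μ (x n)) ∧ InLam μ xl ∧ InLam μ y ∧
        Monotone x ∧ (⨆ n, x n) = xl ∧
        (∀ n, x n ⊓ y = nullSF μ) ∧ xl ⊓ y = y ∧ y ≠ nullSF μ := by
  let half : unitInterval := ⟨2⁻¹, by norm_num, by norm_num⟩
  have hμ : ∀ n, geometricMeasure half {n} ≠ 0 :=
    geometricMeasure_singleton_ne_zero (by simp [half, Subtype.ext_iff])
      (by simp [half, Subtype.ext_iff])
  have hΛ (m : MeasurableSpace ℕ) : InLam (geometricMeasure half) m :=
    inLam_of_forall_singleton_ne_zero hμ le_top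
  refine ⟨ℕ, ⊤, geometricMeasure half, inferInstance,
    fun n => (⊤ : MeasurableSpace ℕ).comap (min · n), ⊤, (⊤ : MeasurableSpace ℕ).comap (· % 2),
    fun _ => hΛ _, hΛ _, hΛ _, monotone_comap_min, iSup_comap_min_eq_top,
    fun n => ?_, top_inf_eq _, ?_⟩ <;> rw [nullSF_eq_bot hμ]
  · exact comap_inf_comap_eq_bot _ _ n fun a => ⟨a + 2 * n, by omega, by omega⟩
  · exact comap_top_ne_bot (a := 0) (b := 1) (by decide)
end
end

section
/- For arbitrary closed linear subspaces H₁ₐ, H₁ᵦ of a Hilbert space H₁ and H₂ₐ, H₂ᵦ of a Hilbert space H₂, one has (H₁ₐ ⊗ H₂ₐ) ∩ (H₁ᵦ ⊗ H₂ᵦ) = (H₁ₐ ∩ H₁ᵦ) ⊗ (H₂ₐ ∩ H₂ᵦ) as subspaces of H₁ ⊗ H₂. -/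
/-!
Taking adjoints of the slice maps `c ↦ T c d` and `d ↦ T c d` turns an element `x` of `H₁ ⊗ H₂`
into vectors `(T.flip d)† x ∈ H₁` and `(T c)† x ∈ H₂`. The key fact is that `x` lies in `K₁ ⊗ K₂`
exactly when all these slices lie in `K₁` resp. `K₂`: writing every vector of `Hᵢ` as a sum of a
vector in `Kᵢ` and one in `Kᵢᗮ` shows that `K₁ ⊗ K₂` and `K₁ᗮ ⊗ H₂ + H₁ ⊗ K₂ᗮ` are orthogonal with
dense sum, so `K₁ ⊗ K₂` is the orthogonal complement of the latter. A slice lies in `K₁a ⊓ K₁b`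
iff it lies in both, so the slice criterion for the intersections is the conjunction of the two
criteria.
-/

open RealInnerProductSpace

noncomputable section

variable {H₁ H₂ H : Type*}
  [NormedAddCommGroup H₁] [InnerProductSpace ℝ H₁] [CompleteSpace H₁]
  [NormedAddCommGroup H₂] [InnerProductSpace ℝ H₂] [CompleteSpace H₂]
  [NormedAddCommGroup H] [InnerProductSpace ℝ H] [CompleteSpace H]

/-- For closed subspaces `K₁ ⊆ H₁`, `K₂ ⊆ H₂`, the subspace `K₁ ⊗ K₂` of `H = H₁ ⊗ H₂`:
the closed subspace generated by the elementary tensors `k₁ ⊗ k₂`, `k₁ ∈ K₁`, `k₂ ∈ K₂`;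
here the tensor product structure is given by a bilinear map `T : H₁ → H₂ → H`. -/
def tensorSub (T : H₁ →L[ℝ] H₂ →L[ℝ] H) (K₁ : Submodule ℝ H₁) (K₂ : Submodule ℝ H₂) :
    Submodule ℝ H :=
  (Submodule.span ℝ {z : H | ∃ a ∈ K₁, ∃ b ∈ K₂, z = T a b}).topologicalClosure

open scoped InnerProduct

namespace Submodule

variable {𝕜 E F : Type*} [RCLike 𝕜]
  [NormedAddCommGroup E] [InnerProductSpace 𝕜 E] [CompleteSpace E]
  [NormedAddCommGroup F] [InnerProductSpace 𝕜 F] [CompleteSpace F]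

theorem eq_orthogonal_of_le_of_dense_sup {V W : Submodule 𝕜 E} [V.HasOrthogonalProjection]
    (hVW : V ≤ Wᗮ) (hdense : (V ⊔ W).topologicalClosure = ⊤) : V = Wᗮ :=
  calc V = V ⊔ (V ⊔ W)ᗮ := by rw [topologicalClosure_eq_top_iff.mp hdense, sup_bot_eq]
    _ = Wᗮ := by rw [← inf_orthogonal, sup_orthogonal_inf_of_hasOrthogonalProjection hVW]

theorem adjoint_apply_mem_iff (K : Submodule 𝕜 E) [K.HasOrthogonalProjection] (A : E →L[𝕜] F)
    (x : F) : (A†) x ∈ K ↔ ∀ a ∈ Kᗮ, inner 𝕜 (A a) x = 0 := by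
  conv_lhs => rw [← K.orthogonal_orthogonal]
  simp only [mem_orthogonal, ContinuousLinearMap.adjoint_inner_right]

end Submodule

open Submodule

section TensorSub

variable {E₁ E₂ E : Type*}
  [NormedAddCommGroup E₁] [InnerProductSpace ℝ E₁]
  [NormedAddCommGroup E₂] [InnerProductSpace ℝ E₂]
  [NormedAddCommGroup E] [InnerProductSpace ℝ E]
  (T : E₁ →L[ℝ] E₂ →L[ℝ] E)

theorem apply_mem_tensorSub {K₁ : Submodule ℝ E₁} {K₂ : Submodule ℝ E₂} {a : E₁} {b : E₂}
    (ha : a ∈ K₁) (hb : b ∈ K₂) : T a b ∈ tensorSub T K₁ K₂ :=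
  le_topologicalClosure _ (subset_span ⟨a, ha, b, hb, rfl⟩)

theorem mem_orthogonal_tensorSub_iff {K₁ : Submodule ℝ E₁} {K₂ : Submodule ℝ E₂} {x : E} :
    x ∈ (tensorSub T K₁ K₂)ᗮ ↔ ∀ a ∈ K₁, ∀ b ∈ K₂, ⟪T a b, x⟫ = 0 := by
  refine ⟨fun hx a ha b hb => inner_right_of_mem_orthogonal (apply_mem_tensorSub T ha hb) hx,
    fun h => ?_⟩
  have hle : tensorSub T K₁ K₂ ≤ (ℝ ∙ x)ᗮ := by
    refine topologicalClosure_minimal _ (span_le.mpr ?_) (isClosed_orthogonal _)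
    rintro _ ⟨a, ha, b, hb, rfl⟩
    exact mem_orthogonal_singleton_iff_inner_left.mpr (h a ha b hb)
  exact (mem_orthogonal _ _).mpr fun u hu =>
    mem_orthogonal_singleton_iff_inner_left.mp (hle hu)

theorem isOrtho_tensorSub (hinner : ∀ (a c : E₁) (b d : E₂), ⟪T a b, T c d⟫ = ⟪a, c⟫ * ⟪b, d⟫)
    {K₁ K₁' : Submodule ℝ E₁} {K₂ K₂' : Submodule ℝ E₂} (h : K₁ ⟂ K₁' ∨ K₂ ⟂ K₂') :
    tensorSub T K₁ K₂ ⟂ tensorSub T K₁' K₂' := by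
  refine isOrtho_iff_le.mpr (topologicalClosure_minimal _ (span_le.mpr ?_) (isClosed_orthogonal _))
  rintro _ ⟨a, ha, b, hb, rfl⟩
  refine (mem_orthogonal_tensorSub_iff T).mpr fun a' ha' b' hb' => ?_
  rw [hinner]
  rcases h with h | h
  · rw [inner_right_of_mem_orthogonal ha' (h.le ha), zero_mul]
  · rw [inner_right_of_mem_orthogonal hb' (h.le hb), mul_zero]

theorem dense_tensorSub_sup_tensorSub_orthogonal
    (hdense : (span ℝ {z : E | ∃ a b, z = T a b}).topologicalClosure = ⊤)
    (K₁ : Submodule ℝ E₁) (K₂ : Submodule ℝ E₂) [K₁.HasOrthogonalProjection]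
    [K₂.HasOrthogonalProjection] :
    (tensorSub T K₁ K₂ ⊔ (tensorSub T K₁ᗮ ⊤ ⊔ tensorSub T ⊤ K₂ᗮ)).topologicalClosure = ⊤ := by
  rw [eq_top_iff, ← hdense]
  refine topologicalClosure_mono (span_le.mpr ?_)
  rintro _ ⟨a, b, rfl⟩
  obtain ⟨a₁, ha₁, a₂, ha₂, rfl⟩ := K₁.exists_add_mem_mem_orthogonal a
  obtain ⟨b₁, hb₁, b₂, hb₂, rfl⟩ := K₂.exists_add_mem_mem_orthogonal b
  have hsplit : T (a₁ + a₂) (b₁ + b₂) = T a₁ b₁ + (T a₂ (b₁ + b₂) + T a₁ b₂) := by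
    simp only [map_add, add_apply]
    abel
  rw [hsplit]
  exact add_mem (mem_sup_left (apply_mem_tensorSub T ha₁ hb₁))
    (mem_sup_right (add_mem (mem_sup_left (apply_mem_tensorSub T ha₂ mem_top))
      (mem_sup_right (apply_mem_tensorSub T mem_top hb₂))))

theorem tensorSub_eq_orthogonal [CompleteSpace E]
    (hinner : ∀ (a c : E₁) (b d : E₂), ⟪T a b, T c d⟫ = ⟪a, c⟫ * ⟪b, d⟫)
    (hdense : (span ℝ {z : E | ∃ a b, z = T a b}).topologicalClosure = ⊤)
    (K₁ : Submodule ℝ E₁) (K₂ : Submodule ℝ E₂) [K₁.HasOrthogonalProjection]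
    [K₂.HasOrthogonalProjection] :
    tensorSub T K₁ K₂ = (tensorSub T K₁ᗮ ⊤ ⊔ tensorSub T ⊤ K₂ᗮ)ᗮ := by
  have : (tensorSub T K₁ K₂).HasOrthogonalProjection := by unfold tensorSub; infer_instance
  refine eq_orthogonal_of_le_of_dense_sup (isOrtho_iff_le.mp (isOrtho_sup_right.mpr ⟨?_, ?_⟩))
    (dense_tensorSub_sup_tensorSub_orthogonal T hdense K₁ K₂)
  · exact isOrtho_tensorSub T hinner (Or.inl (isOrtho_orthogonal_right K₁))
  · exact isOrtho_tensorSub T hinner (Or.inr (isOrtho_orthogonal_right K₂))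

theorem mem_tensorSub_iff [CompleteSpace E₁] [CompleteSpace E₂] [CompleteSpace E]
    (hinner : ∀ (a c : E₁) (b d : E₂), ⟪T a b, T c d⟫ = ⟪a, c⟫ * ⟪b, d⟫)
    (hdense : (span ℝ {z : E | ∃ a b, z = T a b}).topologicalClosure = ⊤)
    {K₁ : Submodule ℝ E₁} {K₂ : Submodule ℝ E₂} (hK₁ : IsClosed (K₁ : Set E₁))
    (hK₂ : IsClosed (K₂ : Set E₂)) {x : E} :
    x ∈ tensorSub T K₁ K₂ ↔ (∀ b, ((T.flip b)†) x ∈ K₁) ∧ ∀ a, ((T a)†) x ∈ K₂ := by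
  have := hK₁.completeSpace_coe
  have := hK₂.completeSpace_coe
  rw [tensorSub_eq_orthogonal T hinner hdense, ← inf_orthogonal, mem_inf,
    mem_orthogonal_tensorSub_iff, mem_orthogonal_tensorSub_iff]
  simp only [adjoint_apply_mem_iff, ContinuousLinearMap.flip_apply, mem_top, forall_const]
  exact and_congr ⟨fun h b a ha => h a ha b, fun h a ha b => h b a ha⟩ Iff.rfl

end TensorSub

/-- If `H` is (isomorphic to) the Hilbert tensor product `H₁ ⊗ H₂` — witnessed by a bilinear
map `T` with `⟪T a b, T c d⟫ = ⟪a,c⟫⟪b,d⟫` whose elementary tensors span a dense subspace —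
then for arbitrary closed subspaces,
`(H₁ₐ ⊗ H₂ₐ) ∩ (H₁ᵦ ⊗ H₂ᵦ) = (H₁ₐ ∩ H₁ᵦ) ⊗ (H₂ₐ ∩ H₂ᵦ)`. -/
theorem stmt5 (T : H₁ →L[ℝ] H₂ →L[ℝ] H)
    (hinner : ∀ (a c : H₁) (b d : H₂), ⟪T a b, T c d⟫ = ⟪a, c⟫ * ⟪b, d⟫)
    (hdense : (Submodule.span ℝ {z : H | ∃ a b, z = T a b}).topologicalClosure = ⊤)
    (K₁a K₁b : Submodule ℝ H₁) (K₂a K₂b : Submodule ℝ H₂)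
    (h₁a : IsClosed (K₁a : Set H₁)) (h₁b : IsClosed (K₁b : Set H₁))
    (h₂a : IsClosed (K₂a : Set H₂)) (h₂b : IsClosed (K₂b : Set H₂)) :
    tensorSub T K₁a K₂a ⊓ tensorSub T K₁b K₂b = tensorSub T (K₁a ⊓ K₁b) (K₂a ⊓ K₂b) := by
  ext x
  simp only [mem_inf, mem_tensorSub_iff T hinner hdense h₁a h₂a,
    mem_tensorSub_iff T hinner hdense h₁b h₂b,
    mem_tensorSub_iff T hinner hdense (K₁ := K₁a ⊓ K₁b) (K₂ := K₂a ⊓ K₂b) (h₁a.inter h₁b)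
      (h₂a.inter h₂b), forall_and]
  tauto
end
end

section
/- The set of pairs (x, y) ∈ Λ × Λ such that x and y are independent sub-σ-fields is closed in the product of the strong operator topologies. -/
open MeasureTheory Filter Topology

set_option synthInstance.maxHeartbeats 400000
noncomputable section

variable {Ω : Type*}

/-- Independence of two sub-σ-fields. -/
def IndepSF {m0 : MeasurableSpace Ω} (μ : Measure Ω) (x y : MeasurableSpace Ω) : Prop :=
  ∀ s t : Set Ω, MeasurableSet[x] s → MeasurableSet[y] t → μ (s ∩ t) = μ s * μ t

/-! If `F` is `x`-measurable and `G` is `y`-measurable with `x`, `y` independent, then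
`⟪F, G⟫ = 𝔼F · 𝔼G`; since conditional expectations preserve the mean, this gives
`⟪Q_{x n} f, Q_{y n} g⟫ = 𝔼f · 𝔼g` for every `n`. Strong convergence of the projections passes to
the limit in the inner product, and for `f = 1_s`, `g = 1_t` with `s ∈ xl`, `t ∈ yl` (fixed by the
limit projections) the identity reads `P(s ∩ t) = P(s) P(t)`. -/

open ProbabilityTheory

section Independence

variable {m0 : MeasurableSpace Ω} {μ : Measure Ω} {x y : MeasurableSpace Ω}

theorem integral_mul_eq_mul_integral_of_indep (hxy : Indep x y μ) (hx : x ≤ m0) (hy : y ≤ m0)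
    {f g : Ω → ℝ} (hf : AEStronglyMeasurable[x] f μ) (hg : AEStronglyMeasurable[y] g μ) :
    ∫ a, f a * g a ∂μ = (∫ a, f a ∂μ) * ∫ a, g a ∂μ := by
  obtain ⟨f', hf', hff'⟩ := hf
  obtain ⟨g', hg', hgg'⟩ := hg
  have hindep : IndepFun f' g' μ :=
    indep_of_indep_of_le_right (indep_of_indep_of_le_left hxy hf'.measurable.comap_le)
      hg'.measurable.comap_le
  calc ∫ a, f a * g a ∂μ = ∫ a, f' a * g' a ∂μ := integral_congr_ae (hff'.mul hgg')
    _ = (∫ a, f' a ∂μ) * ∫ a, g' a ∂μ :=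
        hindep.integral_mul_eq_mul_integral (hf'.mono hx).aestronglyMeasurable
          (hg'.mono hy).aestronglyMeasurable
    _ = (∫ a, f a ∂μ) * ∫ a, g a ∂μ := by rw [integral_congr_ae hff', integral_congr_ae hgg']

theorem L2.real_inner_eq_mul_integral_of_indep (hxy : Indep x y μ) (hx : x ≤ m0) (hy : y ≤ m0)
    {F G : Lp ℝ 2 μ} (hF : AEStronglyMeasurable[x] F μ) (hG : AEStronglyMeasurable[y] G μ) :
    inner ℝ F G = (∫ a, F a ∂μ) * ∫ a, G a ∂μ := by
  rw [L2.inner_def, ← integral_mul_eq_mul_integral_of_indep hxy hx hy hF hG]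
  simp only [RCLike.inner_apply, conj_trivial, mul_comm]

end Independence

section Projection

variable {m0 : MeasurableSpace Ω} {μ : Measure Ω} {m x y : MeasurableSpace Ω}

theorem Q_apply_of_le (hm : m ≤ m0) (f : Lp ℝ 2 μ) : Q μ m f = condExpL2 ℝ ℝ hm f := by
  rw [Q, dif_pos hm]
  rfl

theorem Q_apply_of_mem (hm : m ≤ m0) {f : Lp ℝ 2 μ} (hf : f ∈ L2S μ m) : Q μ m f = f := by
  have : Fact (m ≤ m0) := ⟨hm⟩
  rw [Q, dif_pos hm]
  exact congrArg Subtype.val ((L2S μ m).orthogonalProjectionOnto_mem_subspace_eq_self ⟨f, hf⟩)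

theorem aestronglyMeasurable_Q (hm : m ≤ m0) (f : Lp ℝ 2 μ) :
    AEStronglyMeasurable[m] (Q μ m f) μ := by
  rw [Q_apply_of_le hm]
  exact aestronglyMeasurable_condExpL2 hm f

theorem integral_Q [IsFiniteMeasure μ] (hm : m ≤ m0) (f : Lp ℝ 2 μ) :
    ∫ a, Q μ m f a ∂μ = ∫ a, f a ∂μ := by
  simpa only [Q_apply_of_le hm, setIntegral_univ] using
    integral_condExpL2_eq (𝕜 := ℝ) hm f MeasurableSet.univ (measure_ne_top μ _)

theorem IndepSF.real_inner_Q [IsFiniteMeasure μ] (hxy : IndepSF μ x y) (hx : x ≤ m0)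
    (hy : y ≤ m0) (f g : Lp ℝ 2 μ) :
    inner ℝ (Q μ x f) (Q μ y g) = (∫ a, f a ∂μ) * ∫ a, g a ∂μ := by
  rw [L2.real_inner_eq_mul_integral_of_indep ((Indep_iff x y μ).2 hxy) hx hy
    (aestronglyMeasurable_Q hx f) (aestronglyMeasurable_Q hy g), integral_Q hx, integral_Q hy]

theorem real_inner_Q_of_SOTLim [IsFiniteMeasure μ] {x y : ℕ → MeasurableSpace Ω}
    {xl yl : MeasurableSpace Ω} (hx : ∀ n, x n ≤ m0) (hy : ∀ n, y n ≤ m0)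
    (hind : ∀ n, IndepSF μ (x n) (y n)) (hlx : SOTLim μ x xl) (hly : SOTLim μ y yl)
    (f g : Lp ℝ 2 μ) :
    inner ℝ (Q μ xl f) (Q μ yl g) = (∫ a, f a ∂μ) * ∫ a, g a ∂μ := by
  refine tendsto_nhds_unique ((hlx f).inner (hly g)) ?_
  simp only [fun n => (hind n).real_inner_Q (hx n) (hy n) f g]
  exact tendsto_const_nhds

end Projection

/-- The set of independent pairs `(x, y) ∈ Λ × Λ` is closed in the (metrizable) strong
operator topology: a strong limit of independent pairs is an independent pair. -/
theorem stmt12 {m0 : MeasurableSpace Ω} (μ : Measure Ω) [IsProbabilityMeasure μ]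
    (x y : ℕ → MeasurableSpace Ω) (xl yl : MeasurableSpace Ω)
    (hx : ∀ n, InLam μ (x n)) (hy : ∀ n, InLam μ (y n))
    (hxl : InLam μ xl) (hyl : InLam μ yl)
    (hind : ∀ n, IndepSF μ (x n) (y n))
    (hlx : SOTLim μ x xl) (hly : SOTLim μ y yl) :
    IndepSF μ xl yl := by
  intro s t hs ht
  have hsm := hxl.1 s hs
  have htm := hyl.1 t ht
  have hfactor := real_inner_Q_of_SOTLim (fun n => (hx n).1) (fun n => (hy n).1) hind hlx hly
    (indicatorConstLp 2 hsm (measure_ne_top μ s) (1 : ℝ))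
    (indicatorConstLp 2 htm (measure_ne_top μ t) (1 : ℝ))
  rw [Q_apply_of_mem hxl.1 (mem_lpMeas_indicatorConstLp hxl.1 hs _),
    Q_apply_of_mem hyl.1 (mem_lpMeas_indicatorConstLp hyl.1 ht _),
    L2.real_inner_indicatorConstLp_one_indicatorConstLp_one, integral_indicatorConstLp,
    integral_indicatorConstLp, smul_eq_mul, smul_eq_mul, mul_one, mul_one] at hfactor
  rwa [← ENNReal.toReal_eq_toReal_iff' (measure_ne_top μ _) (by finiteness),
    ENNReal.toReal_mul]
end
end
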